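/- arXiv:2510.13088 — 6 statements merged into one kernel-verified Lean document; each statement's English description precedes it below -/
import Mathlib

section
/- If the revenue curve R(p)=p(1-F(p)) is strictly concave on [0,1], then for every x in (0,1] the truncated revenue curve R_{\le x}(p)=p(1-min(F(p)/F(x),1)) is strictly concave on [0,x]. -/
open MeasureTheory Set Filter

noncomputable section

namespace RepeatedSales

/-- `F` is the CDF of an atomless distribution fully supported on `[0,1]`:
continuous, strictly increasing on `[0,1]`, with `F 0 = 0` and `F 1 = 1`. -/
structure NiceCDF (F : ℝ → ℝ) : Prop where
  cont : Continuous F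
  mono : StrictMonoOn F (Icc (0:ℝ) 1)
  zero : F 0 = 0
  one : F 1 = 1

/-- The (price-posting) revenue curve `R(p) = p (1 - F p)`. -/
def Rcurve (F : ℝ → ℝ) (p : ℝ) : ℝ := p * (1 - F p)

/-- The CDF truncated at `x` from above: `F_{≤x}(v) = min (F v / F x) 1`. -/
def Fle (F : ℝ → ℝ) (x v : ℝ) : ℝ := min (F v / F x) 1

/-- The CDF truncated at `x` from below: `F_{≥x}(v) = max ((F v - F x)/(1 - F x)) 0`. -/
def Fge (F : ℝ → ℝ) (x v : ℝ) : ℝ := max ((F v - F x) / (1 - F x)) 0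

/-- Revenue curve of the truncated distribution `F_{≤x}`. -/
def Rle (F : ℝ → ℝ) (x p : ℝ) : ℝ := p * (1 - Fle F x p)

/-- Revenue curve of the truncated distribution `F_{≥x}`. -/
def Rge (F : ℝ → ℝ) (x p : ℝ) : ℝ := p * (1 - Fge F x p)

/-- Posterior probability of sophistication after a reject. -/
def muR (F : ℝ → ℝ) (μ p1 t : ℝ) : ℝ := μ * F t / (μ * F t + (1 - μ) * F p1)

/-- Posterior probability of sophistication after an accept. -/
def muA (F : ℝ → ℝ) (μ p1 t : ℝ) : ℝ :=
  μ * (1 - F t) / (μ * (1 - F t) + (1 - μ) * (1 - F p1))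

/-- The seller's posterior CDF over values after a first-round reject. -/
def FrejCDF (F : ℝ → ℝ) (μ p1 t v : ℝ) : ℝ :=
  muR F μ p1 t * Fle F t v + (1 - muR F μ p1 t) * Fle F p1 v

/-- The seller's posterior CDF over values after a first-round accept. -/
def FaccCDF (F : ℝ → ℝ) (μ p1 t v : ℝ) : ℝ :=
  muA F μ p1 t * Fge F t v + (1 - muA F μ p1 t) * Fge F p1 v

/-- The second-round revenue curve conditioned on a reject. -/
def Rrej (F : ℝ → ℝ) (μ p1 t p : ℝ) : ℝ := p * (1 - FrejCDF F μ p1 t p)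

/-- The second-round revenue curve conditioned on an accept. -/
def Racc (F : ℝ → ℝ) (μ p1 t p : ℝ) : ℝ := p * (1 - FaccCDF F μ p1 t p)

/-- The (topological) support of a measure on `ℝ`: points all of whose
neighborhoods have positive measure. -/
def msupp (ν : Measure ℝ) : Set ℝ := {x | ∀ U ∈ nhds x, ν U ≠ 0}

/-- A continuation `(p1, p2R, p2A, t)` at sophistication level `μ`:
`p2R`, `p2A` are (random) prices, i.e. probability measures supported in `[0,1]`,
every point of the support of `p2R` (resp. `p2A`) maximizes the reject (resp. accept)
revenue curve over `[0,1]`, and the threshold indifference equation holds.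
The denominators defining the posteriors are assumed positive. -/
structure Continuation (F : ℝ → ℝ) (μ p1 : ℝ) (p2R p2A : Measure ℝ) (t : ℝ) : Prop where
  denR_pos : 0 < μ * F t + (1 - μ) * F p1
  denA_pos : 0 < μ * (1 - F t) + (1 - μ) * (1 - F p1)
  probR : IsProbabilityMeasure p2R
  probA : IsProbabilityMeasure p2A
  suppR01 : msupp p2R ⊆ Icc 0 1
  suppA01 : msupp p2A ⊆ Icc 0 1
  optR : ∀ p ∈ msupp p2R, IsMaxOn (Rrej F μ p1 t) (Icc 0 1) p
  optA : ∀ p ∈ msupp p2A, IsMaxOn (Racc F μ p1 t) (Icc 0 1) p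
  indiff : t - p1 + (∫ x, max (t - x) 0 ∂p2A) = ∫ x, max (t - x) 0 ∂p2R

/-- A continuation with deterministic accept price `p2A ≥ t`. -/
def SophFocused (p2A : Measure ℝ) (t : ℝ) : Prop :=
  ∃ a : ℝ, p2A = Measure.dirac a ∧ t ≤ a

/-- A continuation with deterministic accept price `p2A < t`. -/
def NaiveFocused (p2A : Measure ℝ) (t : ℝ) : Prop :=
  ∃ a : ℝ, p2A = Measure.dirac a ∧ a < t

/-- The seller's expected revenue of a continuation at sophistication `μ`. -/
def sellerRev (F : ℝ → ℝ) (μ p1 t : ℝ) (p2R p2A : Measure ℝ) : ℝ :=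
  μ * (p1 * (1 - F t) + (∫ a, (if a ≤ t then a * (1 - F a) else 0) ∂p2A)
      + ∫ r, r * (F t - F r) ∂p2R)
  + (1 - μ) * (p1 * (1 - F p1) + (∫ a, a * (1 - F a) ∂p2A)
      + ∫ r, (if r ≤ p1 then r * (F p1 - F r) else 0) ∂p2R)

/-- If the revenue curve `R(p) = p(1 - F p)` is strictly concave on
`[0,1]`, then for every `x ∈ (0,1]` the truncated revenue curve
`R_{≤x}(p) = p (1 - min (F p / F x) 1)` is strictly concave on `[0,x]`. -/
theorem truncated_revenue_strictly_concave
    (F : ℝ → ℝ) (hF : NiceCDF F)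
    (hcon : StrictConcaveOn ℝ (Icc (0:ℝ) 1) (Rcurve F)) :
    ∀ x ∈ Ioc (0:ℝ) 1, StrictConcaveOn ℝ (Icc (0:ℝ) x) (Rle F x) := by
  intro x hx
  obtain ⟨hx0, hx1⟩ := hx
  have hsub : Icc (0:ℝ) x ⊆ Icc 0 1 := Icc_subset_Icc le_rfl hx1
  have hxmem : x ∈ Icc (0:ℝ) 1 := ⟨hx0.le, hx1⟩
  have hFx : 0 < F x := by
    have := hF.mono (left_mem_Icc.mpr zero_le_one) hxmem hx0
    rwa [hF.zero] at this
  have key : ∀ p ∈ Icc (0:ℝ) x, Rle F x p = (F x)⁻¹ * Rcurve F p + (1 - (F x)⁻¹) * p := by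
    intro p hp
    have hFp : F p ≤ F x := by
      rcases eq_or_lt_of_le hp.2 with h | h
      · rw [h]
      · exact (hF.mono (hsub hp) hxmem h).le
    have hmin : Fle F x p = F p / F x := by
      unfold Fle
      rw [min_eq_left (by rw [div_le_one hFx]; exact hFp)]
    unfold Rle Rcurve
    rw [hmin]
    field_simp
    ring
  constructor
  · exact convex_Icc 0 x
  · intro p hp q hq hpq a b ha hb hab
    have hmem : a • p + b • q ∈ Icc (0:ℝ) x := (convex_Icc 0 x) hp hq ha.le hb.le hab
    have hlt := hcon.2 (hsub hp) (hsub hq) hpq ha hb hab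
    rw [key _ hp, key _ hq, key _ hmem]
    simp only [smul_eq_mul] at *
    nlinarith [hlt, inv_pos.mpr hFx]

end RepeatedSales
end
end

section
/- For 0<p1≤t≤1 and μ in [0,1] (with μF(t)+(1-μ)F(p1)>0), every maximizer of the reject revenue curve R^R over [0,1] is at most the monopoly price p*, the unique maximizer of R(p)=p(1-F(p)) on [0,1]. -/
open MeasureTheory Set Filter

noncomputable section

namespace RepeatedSales

/-!
Each component `R_{≤x}(p) = p (1 - F_{≤x}(p))` of the reject revenue curve is the positive part of
`(R(p) - p (1 - F x)) / F x`, which strictly decreases wherever `R` does, in particular to the right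
of `p*`. So `R^R`, a convex combination of two such curves, strictly decreases on `[p*, 1]` wherever
it is positive. Its maximum is positive (`R^R > 0` on `(0, p1)`), hence a maximizer `p > p*` would
be beaten by `p*`.
-/

theorem _root_.StrictConcaveOn.strictAntiOn_of_isMaxOn {s : Set ℝ} {f : ℝ → ℝ} {a : ℝ}
    (hf : StrictConcaveOn ℝ s f) (ha : a ∈ s) (hmax : IsMaxOn f s a) :
    StrictAntiOn f (s ∩ Ici a) := by
  rintro q ⟨-, haq⟩ p ⟨hps, -⟩ hqp
  have hpa : f p < f a :=
    (hmax hps).lt_of_ne fun h => (haq.trans_lt hqp).ne' <|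
      hf.eq_of_isMaxOn (fun y hy => h ▸ hmax hy) hmax hps ha
  rcases (mem_Ici.1 haq).eq_or_lt with rfl | haq
  · exact hpa
  · have hq : q ∈ openSegment ℝ a p := by
      rw [openSegment_eq_Ioo (haq.trans hqp)]; exact ⟨haq, hqp⟩
    simpa [min_eq_right hpa.le] using hf.lt_on_openSegment ha hps (haq.trans hqp).ne hq

theorem NiceCDF.pos {F : ℝ → ℝ} (hF : NiceCDF F) {x : ℝ} (hx0 : 0 < x) (hx1 : x ≤ 1) :
    0 < F x := by
  simpa [hF.zero] using hF.mono ⟨le_rfl, zero_le_one⟩ ⟨hx0.le, hx1⟩ hx0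

theorem NiceCDF.le_one {F : ℝ → ℝ} (hF : NiceCDF F) {x : ℝ} (hx : x ∈ Icc (0:ℝ) 1) : F x ≤ 1 := by
  simpa [hF.one] using hF.mono.monotoneOn hx ⟨zero_le_one, le_rfl⟩ hx.2

variable {F : ℝ → ℝ}

theorem Rle_eq_max {x p : ℝ} (hFx : 0 < F x) (hp : 0 ≤ p) :
    Rle F x p = max ((Rcurve F p - p * (1 - F x)) / F x) 0 := by
  have hlin : (Rcurve F p - p * (1 - F x)) / F x = p * (1 - F p / F x) := by
    unfold Rcurve; field_simp; ring
  rw [hlin, Rle, Fle]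
  rcases le_total (F p / F x) 1 with h | h
  · rw [min_eq_left h, max_eq_left (mul_nonneg hp (by linarith))]
  · rw [min_eq_right h, max_eq_right (mul_nonpos_of_nonneg_of_nonpos hp (by linarith))]; ring

theorem Rle_pos {x q : ℝ} (hFx : 0 < F x) (hq : 0 < q) (hFq : F q < F x) : 0 < Rle F x q := by
  rw [Rle, Fle, min_eq_left ((div_lt_one hFx).2 hFq).le]
  exact mul_pos hq (by linarith [(div_lt_one hFx).2 hFq])

theorem Rle_le_and_lt_of_pos_of_rcurve_lt {x q p : ℝ} (hFx0 : 0 < F x) (hFx1 : F x ≤ 1)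
    (hq : 0 ≤ q) (hqp : q ≤ p) (hR : Rcurve F p < Rcurve F q) :
    Rle F x p ≤ Rle F x q ∧ (0 < Rle F x p → Rle F x p < Rle F x q) := by
  have hg : (Rcurve F p - p * (1 - F x)) / F x < (Rcurve F q - q * (1 - F x)) / F x := by
    refine div_lt_div_of_pos_right ?_ hFx0
    linarith [mul_le_mul_of_nonneg_right hqp (sub_nonneg.2 hFx1)]
  rw [Rle_eq_max hFx0 hq, Rle_eq_max hFx0 (hq.trans hqp)]
  refine ⟨max_le_max_right 0 hg.le, fun hpos => ?_⟩
  rw [max_eq_left (lt_max_iff.1 hpos |>.resolve_right (lt_irrefl 0)).le]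
  exact hg.trans_le (le_max_left _ _)

theorem muR_mem_Icc {μ p1 t : ℝ} (hμ : μ ∈ Icc (0:ℝ) 1) (hFt : 0 ≤ F t) (hFp1 : 0 ≤ F p1)
    (hden : 0 < μ * F t + (1 - μ) * F p1) : muR F μ p1 t ∈ Icc (0:ℝ) 1 := by
  have : 0 ≤ (1 - μ) * F p1 := mul_nonneg (sub_nonneg.2 hμ.2) hFp1
  exact ⟨div_nonneg (mul_nonneg hμ.1 hFt) hden.le, (div_le_one hden).2 (by linarith)⟩

theorem Rrej_eq (μ p1 t p : ℝ) :
    Rrej F μ p1 t p = muR F μ p1 t * Rle F t p + (1 - muR F μ p1 t) * Rle F p1 p := by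
  simp only [Rrej, FrejCDF, Rle]; ring

theorem Rrej_pos {μ p1 t q : ℝ} (hm : muR F μ p1 t ∈ Icc (0:ℝ) 1) (hFp1 : 0 < F p1)
    (hFp1t : F p1 ≤ F t) (hq : 0 < q) (hFq : F q < F p1) : 0 < Rrej F μ p1 t q := by
  rw [Rrej_eq]
  simpa using convex_Ioi (0:ℝ) (Rle_pos (hFp1.trans_le hFp1t) hq (hFq.trans_le hFp1t))
    (Rle_pos hFp1 hq hFq) hm.1 (sub_nonneg.2 hm.2) (add_sub_cancel _ _)

theorem Rrej_lt_of_rcurve_lt {μ p1 t q p : ℝ} (hm : muR F μ p1 t ∈ Icc (0:ℝ) 1)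
    (hFt : F t ∈ Ioc (0:ℝ) 1) (hFp1 : F p1 ∈ Ioc (0:ℝ) 1) (hq : 0 ≤ q) (hqp : q ≤ p)
    (hR : Rcurve F p < Rcurve F q) (hpos : 0 < Rrej F μ p1 t p) :
    Rrej F μ p1 t p < Rrej F μ p1 t q := by
  simp only [Rrej_eq] at hpos ⊢
  set m := muR F μ p1 t
  obtain ⟨hA, hA'⟩ := Rle_le_and_lt_of_pos_of_rcurve_lt hFt.1 hFt.2 hq hqp hR
  obtain ⟨hB, hB'⟩ := Rle_le_and_lt_of_pos_of_rcurve_lt hFp1.1 hFp1.2 hq hqp hR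
  have hmA := mul_le_mul_of_nonneg_left hA hm.1
  have hmB := mul_le_mul_of_nonneg_left hB (sub_nonneg.2 hm.2)
  rcases lt_or_ge 0 (m * Rle F t p) with hA_pos | hA_nonpos
  · have hm0 : 0 < m := hm.1.lt_of_ne fun h => by simp [← h] at hA_pos
    have := mul_lt_mul_of_pos_left (hA' (pos_of_mul_pos_right hA_pos hm.1)) hm0
    linarith
  · have hB_pos : 0 < (1 - m) * Rle F p1 p := by linarith
    have hm1 : 0 < 1 - m := (sub_nonneg.2 hm.2).lt_of_ne fun h => by simp [← h] at hB_pos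
    have := mul_lt_mul_of_pos_left (hB' (pos_of_mul_pos_right hB_pos hm1.le)) hm1
    linarith

theorem reject_price_le_monopoly_price_general
    (F : ℝ → ℝ) (hF : NiceCDF F)
    (hcon : StrictConcaveOn ℝ (Icc (0:ℝ) 1) (Rcurve F))
    (pstar : ℝ) (hps_mem : pstar ∈ Icc (0:ℝ) 1)
    (hps_max : IsMaxOn (Rcurve F) (Icc (0:ℝ) 1) pstar)
    (μ p1 t : ℝ) (hμ : μ ∈ Icc (0:ℝ) 1)
    (hp1 : 0 < p1) (hp1t : p1 ≤ t) (ht : t ≤ 1)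
    (hden : 0 < μ * F t + (1 - μ) * F p1) :
    ∀ p ∈ Icc (0:ℝ) 1, IsMaxOn (Rrej F μ p1 t) (Icc (0:ℝ) 1) p → p ≤ pstar := by
  intro p hp hmax
  by_contra! hlt
  have hp1_mem : p1 ∈ Icc (0:ℝ) 1 := ⟨hp1.le, hp1t.trans ht⟩
  have hFp1 : F p1 ∈ Ioc (0:ℝ) 1 := ⟨hF.pos hp1 hp1_mem.2, hF.le_one hp1_mem⟩
  have hFt : F t ∈ Ioc (0:ℝ) 1 :=
    ⟨hF.pos (hp1.trans_le hp1t) ht, hF.le_one ⟨(hp1.trans_le hp1t).le, ht⟩⟩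
  have hm := muR_mem_Icc hμ hFt.1.le hFp1.1.le hden
  have hq_mem : p1 / 2 ∈ Icc (0:ℝ) 1 := ⟨by positivity, by linarith [hp1_mem.2]⟩
  have hpos : 0 < Rrej F μ p1 t p :=
    (Rrej_pos hm hFp1.1 (hF.mono.monotoneOn hp1_mem ⟨hp1_mem.1.trans hp1t, ht⟩ hp1t)
      (half_pos hp1) (hF.mono hq_mem hp1_mem (half_lt_self hp1))).trans_le (hmax hq_mem)
  have hR : Rcurve F p < Rcurve F pstar :=
    hcon.strictAntiOn_of_isMaxOn hps_mem hps_max ⟨hps_mem, self_mem_Ici⟩ ⟨hp, hlt.le⟩ hlt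
  exact (Rrej_lt_of_rcurve_lt hm hFt hFp1 hps_mem.1 hlt.le hR hpos).not_ge (hmax hps_mem)

/-- For `0 < p1 ≤ t ≤ 1` and `μ ∈ [0,1]` with
`μ F(t) + (1-μ) F(p1) > 0`, every maximizer of the reject revenue curve `R^R`
over `[0,1]` is at most the monopoly price `p*`, the unique maximizer of
`R(p) = p(1 - F p)` on `[0,1]`. -/
theorem reject_price_le_monopoly_price
    (F : ℝ → ℝ) (hF : NiceCDF F)
    (hcon : StrictConcaveOn ℝ (Icc (0:ℝ) 1) (Rcurve F))
    (pstar : ℝ) (hps_mem : pstar ∈ Icc (0:ℝ) 1)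
    (hps_max : IsMaxOn (Rcurve F) (Icc (0:ℝ) 1) pstar)
    (hps_uniq : ∀ q ∈ Icc (0:ℝ) 1, IsMaxOn (Rcurve F) (Icc (0:ℝ) 1) q → q = pstar)
    (μ p1 t : ℝ) (hμ : μ ∈ Icc (0:ℝ) 1)
    (hp1 : 0 < p1) (hp1t : p1 ≤ t) (ht : t ≤ 1)
    (hden : 0 < μ * F t + (1 - μ) * F p1) :
    ∀ p ∈ Icc (0:ℝ) 1, IsMaxOn (Rrej F μ p1 t) (Icc (0:ℝ) 1) p → p ≤ pstar :=
  reject_price_le_monopoly_price_general F hF hcon pstar hps_mem hps_max μ p1 t hμ hp1 hp1t ht hden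

end RepeatedSales
end
end

section
/- For 0<p1≤t<1 and μ in [0,1] (with μ(1-F(t))+(1-μ)(1-F(p1))>0), every maximizer of the accept revenue curve R^A over [0,1] is at least the monopoly price p*, the unique maximizer of R(p)=p(1-F(p)) on [0,1]. -/
/-! After an accept the seller's posterior is a mixture of the truncations `F_{≥t}` and
`F_{≥p1}`, so `R^A = μ_A R_{≥t} + (1 - μ_A) R_{≥p1}`. A truncated revenue curve `R_{≥x}` is the
identity below `x` and `R / (1 - F x)` above it, the two pieces meeting at `x`; strict concavity
makes `R` strictly increasing up to `p*`, hence so is every `R_{≥x}`, and with it `R^A`. So no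
maximizer of `R^A` lies below `p*`. -/

open MeasureTheory Set Filter

noncomputable section

namespace RepeatedSales

theorem _root_.StrictConcaveOn.strictMonoOn_of_isMaxOn {𝕜 β : Type*} [Field 𝕜] [LinearOrder 𝕜]
    [IsStrictOrderedRing 𝕜] [AddCommMonoid β] [LinearOrder β] [IsOrderedAddMonoid β]
    [Module 𝕜 β] [PosSMulStrictMono 𝕜 β] {f : 𝕜 → β} {s : Set 𝕜} {m : 𝕜}
    (hf : StrictConcaveOn 𝕜 s f) (hms : m ∈ s) (hm : IsMaxOn f s m) :
    StrictMonoOn f (s ∩ Iic m) := by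
  intro x ⟨hxs, _⟩ y ⟨_, (hym : y ≤ m)⟩ hxy
  have hxm : x < m := hxy.trans_le hym
  have lt_interior : ∀ z ∈ Ioo x m, f x < f z := fun z hz => by
    have := hf.lt_on_openSegment hxs hms hxm.ne (by rwa [openSegment_eq_Ioo hxm])
    rwa [min_eq_left (hm hxs)] at this
  rcases hym.lt_or_eq with hym | rfl
  · exact lt_interior y ⟨hxy, hym⟩
  · have hz : (x + y) / 2 ∈ Ioo x y := ⟨by linarith, by linarith⟩
    have hzs : (x + y) / 2 ∈ s :=
      hf.1.openSegment_subset hxs hms (by rwa [openSegment_eq_Ioo hxm])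
    exact (lt_interior _ hz).trans_le (hm hzs)

theorem _root_.StrictMonoOn.convex_combination {α : Type*} [Preorder α] {f g : α → ℝ}
    {s : Set α} {a : ℝ}
    (hf : StrictMonoOn f s) (hg : StrictMonoOn g s) (ha : a ∈ Icc (0:ℝ) 1) :
    StrictMonoOn (fun p => a * f p + (1 - a) * g p) s := by
  intro x hx y hy hxy
  have hd : 0 < min (f y - f x) (g y - g x) :=
    lt_min (sub_pos.2 (hf hx hy hxy)) (sub_pos.2 (hg hx hy hxy))
  dsimp only
  nlinarith [mul_le_mul_of_nonneg_left (min_le_left (f y - f x) (g y - g x)) ha.1,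
    mul_le_mul_of_nonneg_left (min_le_right (f y - f x) (g y - g x)) (sub_nonneg.2 ha.2)]

lemma muA_mem_Icc {F : ℝ → ℝ} {μ p1 t : ℝ} (hμ : μ ∈ Icc (0:ℝ) 1) (hFt : F t ≤ 1)
    (hFp1 : F p1 ≤ 1) (hden : 0 < μ * (1 - F t) + (1 - μ) * (1 - F p1)) :
    muA F μ p1 t ∈ Icc (0:ℝ) 1 := by
  have ha : 0 ≤ μ * (1 - F t) := mul_nonneg hμ.1 (by linarith)
  have hb : 0 ≤ (1 - μ) * (1 - F p1) := mul_nonneg (by linarith [hμ.2]) (by linarith)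
  exact ⟨div_nonneg ha hden.le, div_le_one_of_le₀ (by linarith) hden.le⟩

lemma Racc_eq_muA_mul_Rge_add (F : ℝ → ℝ) (μ p1 t p : ℝ) :
    Racc F μ p1 t p = muA F μ p1 t * Rge F t p + (1 - muA F μ p1 t) * Rge F p1 p := by
  simp only [Racc, FaccCDF, Rge]
  ring

namespace NiceCDF

variable {F : ℝ → ℝ}

lemma apply_le_one (hF : NiceCDF F) {x : ℝ} (hx : x ∈ Icc (0:ℝ) 1) : F x ≤ 1 :=
  hF.one ▸ hF.mono.monotoneOn hx ⟨zero_le_one, le_rfl⟩ hx.2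

lemma apply_lt_one (hF : NiceCDF F) {x : ℝ} (hx : x ∈ Ico (0:ℝ) 1) : F x < 1 :=
  hF.one ▸ hF.mono ⟨hx.1, hx.2.le⟩ ⟨zero_le_one, le_rfl⟩ hx.2

lemma Rge_eq_self_of_le (hF : NiceCDF F) {x p : ℝ} (hx : x ∈ Icc (0:ℝ) 1) (hp : 0 ≤ p)
    (hpx : p ≤ x) : Rge F x p = p := by
  have hFpx : F p ≤ F x := hF.mono.monotoneOn ⟨hp, hpx.trans hx.2⟩ hx hpx
  have hFge : Fge F x p = 0 :=
    max_eq_right (div_nonpos_of_nonpos_of_nonneg (by linarith) (by linarith [hF.apply_le_one hx]))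
  rw [Rge, hFge, sub_zero, mul_one]

lemma Rge_eq_Rcurve_div_of_le (hF : NiceCDF F) {x p : ℝ} (hx : x ∈ Ico (0:ℝ) 1) (hp : p ≤ 1)
    (hxp : x ≤ p) : Rge F x p = Rcurve F p / (1 - F x) := by
  have hFxp : F x ≤ F p := hF.mono.monotoneOn ⟨hx.1, hx.2.le⟩ ⟨hx.1.trans hxp, hp⟩ hxp
  have hpos : 0 < 1 - F x := by linarith [hF.apply_lt_one hx]
  rw [Rge, Fge, max_eq_left (div_nonneg (by linarith) hpos.le), Rcurve]
  field_simp
  ring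

lemma Rge_strictMonoOn (hF : NiceCDF F) (hcon : StrictConcaveOn ℝ (Icc (0:ℝ) 1) (Rcurve F))
    {pstar : ℝ} (hps_mem : pstar ∈ Icc (0:ℝ) 1)
    (hps_max : IsMaxOn (Rcurve F) (Icc (0:ℝ) 1) pstar) {x : ℝ} (hx : x ∈ Ico (0:ℝ) 1) :
    StrictMonoOn (Rge F x) (Icc 0 pstar) := by
  have below : StrictMonoOn (Rge F x) (Icc 0 x) := fun p hp q hq hpq => by
    rwa [hF.Rge_eq_self_of_le (Ico_subset_Icc_self hx) hp.1 hp.2,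
      hF.Rge_eq_self_of_le (Ico_subset_Icc_self hx) hq.1 hq.2]
  rcases le_or_gt x pstar with hxps | hpsx
  · have hR : StrictMonoOn (Rcurve F) (Icc 0 pstar) :=
      (hcon.strictMonoOn_of_isMaxOn hps_mem hps_max).mono
        fun y hy => ⟨⟨hy.1, hy.2.trans hps_mem.2⟩, hy.2⟩
    have above : StrictMonoOn (Rge F x) (Icc x pstar) := fun p hp q hq hpq => by
      rw [hF.Rge_eq_Rcurve_div_of_le hx (hp.2.trans hps_mem.2) hp.1,
        hF.Rge_eq_Rcurve_div_of_le hx (hq.2.trans hps_mem.2) hq.1]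
      exact div_lt_div_of_pos_right (hR ⟨hx.1.trans hp.1, hp.2⟩ ⟨hx.1.trans hq.1, hq.2⟩ hpq)
        (by linarith [hF.apply_lt_one hx])
    rw [← Icc_union_Icc_eq_Icc hx.1 hxps]
    exact below.union above ⟨right_mem_Icc.2 hx.1, fun _ h => h.2⟩
      ⟨left_mem_Icc.2 hxps, fun _ h => h.1⟩
  · exact below.mono (Icc_subset_Icc_right hpsx.le)

end NiceCDF

theorem accept_price_ge_monopoly_price_general
    (F : ℝ → ℝ) (hF : NiceCDF F)
    (hcon : StrictConcaveOn ℝ (Icc (0:ℝ) 1) (Rcurve F))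
    (pstar : ℝ) (hps_mem : pstar ∈ Icc (0:ℝ) 1)
    (hps_max : IsMaxOn (Rcurve F) (Icc (0:ℝ) 1) pstar)
    (μ p1 t : ℝ) (hμ : μ ∈ Icc (0:ℝ) 1)
    (hp1 : 0 < p1) (hp1t : p1 ≤ t) (ht : t < 1)
    (hden : 0 < μ * (1 - F t) + (1 - μ) * (1 - F p1)) :
    ∀ p ∈ Icc (0:ℝ) 1, IsMaxOn (Racc F μ p1 t) (Icc (0:ℝ) 1) p → pstar ≤ p := by
  intro p hp hmax
  have ht' : t ∈ Ico (0:ℝ) 1 := ⟨hp1.le.trans hp1t, ht⟩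
  have hp1' : p1 ∈ Ico (0:ℝ) 1 := ⟨hp1.le, hp1t.trans_lt ht⟩
  have hmono : StrictMonoOn (Racc F μ p1 t) (Icc 0 pstar) := by
    simp only [funext (Racc_eq_muA_mul_Rge_add F μ p1 t)]
    exact (hF.Rge_strictMonoOn hcon hps_mem hps_max ht').convex_combination
      (hF.Rge_strictMonoOn hcon hps_mem hps_max hp1')
      (muA_mem_Icc hμ (hF.apply_lt_one ht').le (hF.apply_lt_one hp1').le hden)
  by_contra! hlt
  exact (hmax hps_mem).not_gt (hmono ⟨hp.1, hlt.le⟩ ⟨hps_mem.1, le_rfl⟩ hlt)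

/-- For `0 < p1 ≤ t < 1` and `μ ∈ [0,1]` with
`μ (1 - F t) + (1-μ)(1 - F p1) > 0`, every maximizer of the accept revenue curve
`R^A` over `[0,1]` is at least the monopoly price `p*`, the unique maximizer of
`R(p) = p(1 - F p)` on `[0,1]`. -/
theorem accept_price_ge_monopoly_price
    (F : ℝ → ℝ) (hF : NiceCDF F)
    (hcon : StrictConcaveOn ℝ (Icc (0:ℝ) 1) (Rcurve F))
    (pstar : ℝ) (hps_mem : pstar ∈ Icc (0:ℝ) 1)
    (hps_max : IsMaxOn (Rcurve F) (Icc (0:ℝ) 1) pstar)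
    (hps_uniq : ∀ q ∈ Icc (0:ℝ) 1, IsMaxOn (Rcurve F) (Icc (0:ℝ) 1) q → q = pstar)
    (μ p1 t : ℝ) (hμ : μ ∈ Icc (0:ℝ) 1)
    (hp1 : 0 < p1) (hp1t : p1 ≤ t) (ht : t < 1)
    (hden : 0 < μ * (1 - F t) + (1 - μ) * (1 - F p1)) :
    ∀ p ∈ Icc (0:ℝ) 1, IsMaxOn (Racc F μ p1 t) (Icc (0:ℝ) 1) p → pstar ≤ p :=
  accept_price_ge_monopoly_price_general F hF hcon pstar hps_mem hps_max μ p1 t hμ hp1 hp1t ht hden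

end RepeatedSales
end
end

section
/- Fix t in (0,1). For each (t,μ) with (1-μ)·R'(t)+(1-F(t))·μ ≥ 0, let p1(t,μ) denote the unique first-round price in the sophisticated-focused implementation of t at sophistication μ. Then, for fixed t, the map μ ↦ p1(t,μ) is differentiable and strictly increasing on the set {μ in [0,1) : (1-μ)R'(t)+(1-F(t))μ ≥ 0}. -/
open MeasureTheory Set Filter

noncomputable section

namespace RepeatedSales

/-!
Let `W d = maxRtilt F d` be the maximum over `p ∈ [0, 1]` of `Rtilt F d p = p (d - F p)`. After a
reject at `p₁ ≤ t` the seller's revenue curve is `Rtilt F D / D` on `[0, p₁]` and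
`μ Rtilt F (F t) / D` on `[p₁, t]`, where `D = μ F t + (1 - μ) F p₁` is the reject probability.
In a sophisticated-focused implementation the indifference equation rules out a one-point reject
price, while strict concavity of `R` allows at most one optimal price on each piece and none at the
kink `p₁`. So the seller randomises between the two peaks, and being indifferent between them reads
`W (D μ) = μ W (F t)`.

`W` is a maximum of affine functions of `d` whose maximiser is a continuous, positive subgradient,
so `W` is differentiable and strictly increasing, and the equation determines `D μ`, hence
`F (p₁ μ)`, differentiably in `μ`; as `F' ≠ 0` (again by strict concavity of `R`), so is `p₁ μ`.
Monotonicity comes from comparing the subgradient inequality for `W` with its strict form between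
`D μ` and `F t`.
-/

open scoped Topology

theorem _root_.HasDerivWithinAt.of_comp_left {f g h : ℝ → ℝ} {s : Set ℝ} {x f' h' : ℝ}
    (hg : ContinuousWithinAt g s x) (hf : HasDerivAt f f' (g x)) (hh : HasDerivWithinAt h h' s x)
    (hf' : f' ≠ 0) (hfg : EqOn (f ∘ g) h s) (hx : x ∈ s) : HasDerivWithinAt g (h' / f') s x := by
  have hst : Tendsto g (𝓝[s] x) (𝓝[univ] (g x)) := by rwa [nhdsWithin_univ]
  convert! (hf.hasFDerivAt.hasFDerivWithinAt (s := univ)).of_comp_of_leftInverse hst hh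
    (eventuallyEq_nhdsWithin_of_eqOn hfg) (f'symm := .toSpanSingleton ℝ f'⁻¹)
    (fun _ ↦ by simp [hf']) hx |>.hasDerivWithinAt using 1
  simp [div_eq_mul_inv, mul_comm]

theorem continuousWithinAt_of_strictMonoOn_comp {f g h : ℝ → ℝ} {s I : Set ℝ} {x : ℝ}
    (hf : StrictMonoOn f I) (hI : I ∈ 𝓝 (g x)) (hgI : MapsTo g s I)
    (hh : ContinuousWithinAt h s x) (hfg : EqOn (f ∘ g) h s) (hx : x ∈ s) :
    ContinuousWithinAt g s x := by
  have hxI := mem_of_mem_nhds hI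
  refine tendsto_order.2 ⟨fun a ha => ?_, fun b hb => ?_⟩
  · obtain ⟨l, hl, hlI⟩ := exists_Ioc_subset_of_mem_nhds hI ⟨a, ha⟩
    obtain ⟨c, hc, hcx⟩ := exists_between (max_lt ha hl)
    have hcI : c ∈ I := hlI ⟨(le_max_right _ _).trans_lt hc, hcx.le⟩
    have hfc : f c < h x := hfg hx ▸ hf hcI hxI hcx
    filter_upwards [hh.eventually (eventually_gt_nhds hfc), self_mem_nhdsWithin] with y hy hys
    rw [← hfg hys] at hy
    exact (le_max_left _ _).trans_lt (hc.trans ((hf.lt_iff_lt hcI (hgI hys)).1 hy))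
  · obtain ⟨u, hu, huI⟩ := exists_Ico_subset_of_mem_nhds hI ⟨b, hb⟩
    obtain ⟨c, hxc, hc⟩ := exists_between (lt_min hb hu)
    have hcI : c ∈ I := huI ⟨hxc.le, hc.trans_le (min_le_right _ _)⟩
    have hfc : h x < f c := hfg hx ▸ hf hxI hcI hxc
    filter_upwards [hh.eventually (eventually_lt_nhds hfc), self_mem_nhdsWithin] with y hy hys
    rw [← hfg hys] at hy
    exact ((hf.lt_iff_lt (hgI hys) hcI).1 hy).trans (hc.trans_le (min_le_left _ _))

theorem hasDerivWithinAt_of_strictMonoOn_comp {f g h : ℝ → ℝ} {s I : Set ℝ} {x f' h' : ℝ}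
    (hf : StrictMonoOn f I) (hI : I ∈ 𝓝 (g x)) (hgI : MapsTo g s I) (hfd : HasDerivAt f f' (g x))
    (hf' : f' ≠ 0) (hh : HasDerivWithinAt h h' s x) (hfg : EqOn (f ∘ g) h s) (hx : x ∈ s) :
    HasDerivWithinAt g (h' / f') s x :=
  .of_comp_left (continuousWithinAt_of_strictMonoOn_comp hf hI hgI hh.continuousWithinAt hfg hx)
    hfd hh hf' hfg hx

theorem hasDerivAt_of_forall_add_mul_le {W s : ℝ → ℝ} {x : ℝ}
    (hW : ∀ y z, W y + (z - y) * s y ≤ W z) (hs : ContinuousAt s x) : HasDerivAt W (s x) x := by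
  rw [hasDerivAt_iff_isLittleO]
  have hsmall : (fun z => (z - x) * (s z - s x)) =o[𝓝 x] fun z => z - x :=
    (Asymptotics.isBigO_refl _ _).mul_isLittleO
      ((Asymptotics.isLittleO_one_iff ℝ).2 (by simpa using hs.tendsto.sub_const (s x)))
      |>.congr_right (by simp)
  refine Asymptotics.IsBigO.trans_isLittleO ?_ hsmall
  refine Asymptotics.IsBigO.of_bound 1 (Eventually.of_forall fun z => ?_)
  have h1 := hW x z
  have h2 := hW z x
  rw [one_mul, Real.norm_eq_abs, Real.norm_eq_abs, smul_eq_mul, abs_of_nonneg (by linarith)]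
  exact le_trans (by linarith) (le_abs_self _)

theorem msupp_eq_support (ν : Measure ℝ) : msupp ν = ν.support := by
  ext x
  simp [msupp, Measure.mem_support_iff_forall, pos_iff_ne_zero]

theorem integral_eq_of_msupp_subset_singleton {ν : Measure ℝ} [IsProbabilityMeasure ν] {a : ℝ}
    (h : msupp ν ⊆ {a}) (f : ℝ → ℝ) : ∫ x, f x ∂ν = f a := by
  have hae : ∀ᵐ x ∂ν, x = a :=
    mem_of_superset Measure.support_mem_ae (msupp_eq_support ν ▸ h)
  rw [integral_congr_ae (g := fun _ => f a) (hae.mono fun x hx => by rw [hx]), integral_const]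
  simp

section Revenue

variable {F : ℝ → ℝ}

theorem NiceCDF.pos_s9 (hF : NiceCDF F) {p : ℝ} (hp : p ∈ Ioc 0 1) : 0 < F p :=
  hF.zero ▸ hF.mono (left_mem_Icc.2 zero_le_one) ⟨hp.1.le, hp.2⟩ hp.1

theorem NiceCDF.lt_one (hF : NiceCDF F) {p : ℝ} (hp : p ∈ Ico 0 1) : F p < 1 :=
  hF.one ▸ hF.mono ⟨hp.1, hp.2.le⟩ (right_mem_Icc.2 zero_le_one) hp.2

theorem differentiableAt_of_Rcurve {p : ℝ} (hR : DifferentiableAt ℝ (Rcurve F) p) (hp : p ≠ 0) :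
    DifferentiableAt ℝ F p := by
  have hquot : DifferentiableAt ℝ (fun x => 1 - Rcurve F x / x) p :=
    (differentiableAt_const 1).sub (hR.div differentiableAt_id hp)
  refine hquot.congr_of_eventuallyEq ?_
  filter_upwards [eventually_ne_nhds hp] with x hx
  simp only [Rcurve]
  field_simp
  ring

/-- After a reject at `p₁`, the seller's revenue curve on `[0, p₁]` is `Rtilt F D / D`, with `D`
the reject probability (`Rrej_of_le`). -/
def Rtilt (F : ℝ → ℝ) (d p : ℝ) : ℝ := (d - 1) * p + Rcurve F p

theorem Rtilt_eq_mul (d p : ℝ) : Rtilt F d p = p * (d - F p) := by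
  simp only [Rtilt, Rcurve]; ring

theorem Rtilt_eq_add (c d p : ℝ) : Rtilt F c p = Rtilt F d p + (c - d) * p := by
  simp only [Rtilt]; ring

theorem strictConcaveOn_Rtilt (hcon : StrictConcaveOn ℝ (Icc (0:ℝ) 1) (Rcurve F)) (d : ℝ) :
    StrictConcaveOn ℝ (Icc (0:ℝ) 1) (Rtilt F d) :=
  ((LinearMap.mul ℝ ℝ (d - 1)).concaveOn (convex_Icc 0 1)).add_strictConcaveOn hcon

theorem hasDerivAt_Rtilt (hRd : ∀ p ∈ Icc (0:ℝ) 1, DifferentiableAt ℝ (Rcurve F) p) (d : ℝ)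
    {p : ℝ} (hp : p ∈ Icc (0:ℝ) 1) : HasDerivAt (Rtilt F d) (d - 1 + deriv (Rcurve F) p) p := by
  have h := ((hasDerivAt_id p).const_mul (d - 1)).add (hRd p hp).hasDerivAt
  rwa [mul_one] at h

theorem exists_Rtilt_pos (hF : NiceCDF F) {d x : ℝ} (hd : 0 < d) (hx : 0 < x) :
    ∃ p ∈ Ioo 0 x, 0 < Rtilt F d p := by
  have hsmall : ∀ᶠ p in 𝓝[>] 0, F p < d :=
    (hF.cont.tendsto' 0 0 hF.zero).eventually (eventually_lt_nhds hd) |>.filter_mono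
      nhdsWithin_le_nhds
  obtain ⟨p, hFp, hp⟩ := (hsmall.and (Ioo_mem_nhdsGT hx)).exists
  exact ⟨p, hp, by rw [Rtilt_eq_mul]; exact mul_pos hp.1 (by linarith)⟩

theorem deriv_Rcurve_eq_of_isLocalMax (hRd : ∀ p ∈ Icc (0:ℝ) 1, DifferentiableAt ℝ (Rcurve F) p)
    {d p : ℝ} (hp : p ∈ Icc (0:ℝ) 1) (hmax : IsLocalMax (Rtilt F d) p) :
    deriv (Rcurve F) p = 1 - d := by
  linarith [hmax.hasDerivAt_eq_zero (hasDerivAt_Rtilt hRd d hp)]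

theorem eq_of_isLocalMax_Rtilt (hcon : StrictConcaveOn ℝ (Icc (0:ℝ) 1) (Rcurve F))
    (hRd : ∀ p ∈ Icc (0:ℝ) 1, DifferentiableAt ℝ (Rcurve F) p) {d p q : ℝ}
    (hp : p ∈ Icc (0:ℝ) 1) (hq : q ∈ Icc (0:ℝ) 1) (hpmax : IsLocalMax (Rtilt F d) p)
    (hqmax : IsLocalMax (Rtilt F d) q) : p = q :=
  (hcon.strictAntiOn_deriv hRd).injOn hp hq <| by
    rw [deriv_Rcurve_eq_of_isLocalMax hRd hp hpmax, deriv_Rcurve_eq_of_isLocalMax hRd hq hqmax]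

/-- The point `y` is a local maximum of both curves, as `Rtilt F c - Rtilt F d` is increasing, so
the first-order conditions force `d = c`. -/
theorem eq_of_Rtilt_le_left_of_le_right
    (hRd : ∀ p ∈ Icc (0:ℝ) 1, DifferentiableAt ℝ (Rcurve F) p) {c d y : ℝ} (hy : y ∈ Icc (0:ℝ) 1)
    (hdc : d ≤ c) (hleft : ∀ᶠ p in 𝓝[≤] y, Rtilt F d p ≤ Rtilt F d y)
    (hright : ∀ᶠ p in 𝓝[≥] y, Rtilt F c p ≤ Rtilt F c y) : d = c := by
  have hd : IsLocalMax (Rtilt F d) y := by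
    rw [IsLocalMax, IsMaxFilter, ← nhdsLE_sup_nhdsGE, eventually_sup]
    refine ⟨hleft, (hright.and self_mem_nhdsWithin).mono fun p ⟨hp, hyp⟩ => ?_⟩
    rw [Rtilt_eq_add d c p, Rtilt_eq_add d c y]
    nlinarith [hyp]
  have hc : IsLocalMax (Rtilt F c) y := by
    rw [IsLocalMax, IsMaxFilter, ← nhdsLE_sup_nhdsGE, eventually_sup]
    refine ⟨(hleft.and self_mem_nhdsWithin).mono fun p ⟨hp, hpy⟩ => ?_, hright⟩
    rw [Rtilt_eq_add c d p, Rtilt_eq_add c d y]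
    nlinarith [hpy]
  linarith [deriv_Rcurve_eq_of_isLocalMax hRd hy hd, deriv_Rcurve_eq_of_isLocalMax hRd hy hc]

theorem isMaxOn_Rtilt_of_isLocalMax (hcon : StrictConcaveOn ℝ (Icc (0:ℝ) 1) (Rcurve F)) {d p : ℝ}
    (hp : p ∈ Icc (0:ℝ) 1) (hmax : IsLocalMax (Rtilt F d) p) :
    IsMaxOn (Rtilt F d) (Icc 0 1) p :=
  IsMaxOn.of_isLocalMaxOn_of_concaveOn hp (hmax.on _) (strictConcaveOn_Rtilt hcon d).concaveOn

def argmaxRtilt (F : ℝ → ℝ) (d : ℝ) : ℝ :=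
  Classical.epsilon fun r => r ∈ Icc (0:ℝ) 1 ∧ IsMaxOn (Rtilt F d) (Icc 0 1) r

def maxRtilt (F : ℝ → ℝ) (d : ℝ) : ℝ := Rtilt F d (argmaxRtilt F d)

theorem argmaxRtilt_spec (hF : NiceCDF F) (d : ℝ) :
    argmaxRtilt F d ∈ Icc (0:ℝ) 1 ∧ IsMaxOn (Rtilt F d) (Icc 0 1) (argmaxRtilt F d) :=
  Classical.epsilon_spec <| isCompact_Icc.exists_isMaxOn (nonempty_Icc.2 zero_le_one)
    ((continuous_const.mul continuous_id).add
      (continuous_id.mul (continuous_const.sub hF.cont))).continuousOn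

theorem Rtilt_le_maxRtilt (hF : NiceCDF F) (d : ℝ) {p : ℝ} (hp : p ∈ Icc (0:ℝ) 1) :
    Rtilt F d p ≤ maxRtilt F d :=
  (argmaxRtilt_spec hF d).2 hp

theorem maxRtilt_eq_of_isMaxOn (hF : NiceCDF F) {d p : ℝ} (hp : p ∈ Icc (0:ℝ) 1)
    (hmax : IsMaxOn (Rtilt F d) (Icc 0 1) p) : maxRtilt F d = Rtilt F d p :=
  le_antisymm (hmax (argmaxRtilt_spec hF d).1) (Rtilt_le_maxRtilt hF d hp)

theorem maxRtilt_add_mul_le (hF : NiceCDF F) (d c : ℝ) :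
    maxRtilt F d + (c - d) * argmaxRtilt F d ≤ maxRtilt F c := by
  rw [maxRtilt, ← Rtilt_eq_add]
  exact Rtilt_le_maxRtilt hF c (argmaxRtilt_spec hF d).1

theorem argmaxRtilt_mem_Ioo (hF : NiceCDF F) {d : ℝ} (hd : d ∈ Ioo (0:ℝ) 1) :
    argmaxRtilt F d ∈ Ioo (0:ℝ) 1 := by
  obtain ⟨hmem, hmax⟩ := argmaxRtilt_spec hF d
  obtain ⟨p, hp, hpos⟩ := exists_Rtilt_pos hF hd.1 one_pos
  have hzero : Rtilt F d 0 = 0 := by simp [Rtilt_eq_mul]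
  have hone : Rtilt F d 1 < 0 := by rw [Rtilt_eq_mul, hF.one]; linarith [hd.2]
  refine ⟨hmem.1.lt_of_ne ?_, hmem.2.lt_of_ne ?_⟩ <;> rintro hr
  · have := isMaxOn_iff.1 hmax p ⟨hp.1.le, hp.2.le⟩
    rw [← hr, hzero] at this
    linarith
  · have := isMaxOn_iff.1 hmax 0 (left_mem_Icc.2 zero_le_one)
    rw [hr, hzero] at this
    linarith

theorem deriv_Rcurve_argmaxRtilt (hF : NiceCDF F)
    (hRd : ∀ p ∈ Icc (0:ℝ) 1, DifferentiableAt ℝ (Rcurve F) p) {d : ℝ} (hd : d ∈ Ioo (0:ℝ) 1) :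
    deriv (Rcurve F) (argmaxRtilt F d) = 1 - d := by
  have hr := argmaxRtilt_mem_Ioo hF hd
  exact deriv_Rcurve_eq_of_isLocalMax hRd (Ioo_subset_Icc_self hr)
    ((argmaxRtilt_spec hF d).2.isLocalMax (Icc_mem_nhds hr.1 hr.2))

theorem continuousAt_argmaxRtilt (hF : NiceCDF F)
    (hcon : StrictConcaveOn ℝ (Icc (0:ℝ) 1) (Rcurve F))
    (hRd : ∀ p ∈ Icc (0:ℝ) 1, DifferentiableAt ℝ (Rcurve F) p) {d : ℝ} (hd : d ∈ Ioo (0:ℝ) 1) :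
    ContinuousAt (argmaxRtilt F) d := by
  have hr := argmaxRtilt_mem_Ioo hF hd
  have hanti := hcon.strictAntiOn_deriv hRd
  refine (continuousWithinAt_of_strictMonoOn_comp (f := fun p => -deriv (Rcurve F) p)
    (h := fun d => d - 1) (fun x hx y hy hxy => neg_lt_neg (hanti hx hy hxy))
    (Icc_mem_nhds hr.1 hr.2) (fun e he => Ioo_subset_Icc_self (argmaxRtilt_mem_Ioo hF he))
    (continuous_sub_right 1).continuousWithinAt (fun e he => ?_) hd).continuousAt
    (isOpen_Ioo.mem_nhds hd)
  simp [deriv_Rcurve_argmaxRtilt hF hRd he]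

theorem hasDerivAt_maxRtilt (hF : NiceCDF F) (hcon : StrictConcaveOn ℝ (Icc (0:ℝ) 1) (Rcurve F))
    (hRd : ∀ p ∈ Icc (0:ℝ) 1, DifferentiableAt ℝ (Rcurve F) p) {d : ℝ} (hd : d ∈ Ioo (0:ℝ) 1) :
    HasDerivAt (maxRtilt F) (argmaxRtilt F d) d :=
  hasDerivAt_of_forall_add_mul_le (maxRtilt_add_mul_le hF) (continuousAt_argmaxRtilt hF hcon hRd hd)

theorem strictMonoOn_maxRtilt (hF : NiceCDF F) : StrictMonoOn (maxRtilt F) (Ioo 0 1) :=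
  fun d hd c _ hdc => by
    nlinarith [maxRtilt_add_mul_le hF d c, (argmaxRtilt_mem_Ioo hF hd).1]

/-- The maximiser of `Rtilt F d` does not maximise `Rtilt F c`: the first-order conditions
differ. -/
theorem maxRtilt_add_mul_lt (hF : NiceCDF F)
    (hRd : ∀ p ∈ Icc (0:ℝ) 1, DifferentiableAt ℝ (Rcurve F) p) {c d : ℝ} (hd : d ∈ Ioo (0:ℝ) 1)
    (hcd : c ≠ d) : maxRtilt F d + (c - d) * argmaxRtilt F d < maxRtilt F c := by
  refine (maxRtilt_add_mul_le hF d c).lt_of_ne fun heq => hcd ?_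
  have hr := argmaxRtilt_mem_Ioo hF hd
  have hmax : IsMaxOn (Rtilt F c) (Icc 0 1) (argmaxRtilt F d) := isMaxOn_iff.2 fun p hp => by
    rw [Rtilt_eq_add c d (argmaxRtilt F d)]
    exact (Rtilt_le_maxRtilt hF c hp).trans heq.ge
  have := deriv_Rcurve_eq_of_isLocalMax hRd (Ioo_subset_Icc_self hr)
    (hmax.isLocalMax (Icc_mem_nhds hr.1 hr.2))
  linarith [deriv_Rcurve_argmaxRtilt hF hRd hd]

theorem deriv_ne_zero_of_Rcurve (hF : NiceCDF F) (hcon : StrictConcaveOn ℝ (Icc (0:ℝ) 1) (Rcurve F))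
    (hRd : ∀ p ∈ Icc (0:ℝ) 1, DifferentiableAt ℝ (Rcurve F) p) {p : ℝ} (hp : p ∈ Ioc 0 1) :
    deriv F p ≠ 0 := by
  intro h0
  have hpI : p ∈ Icc (0:ℝ) 1 := ⟨hp.1.le, hp.2⟩
  have hR : HasDerivAt (Rcurve F) (1 - F p) p :=
    ((hasDerivAt_id p).mul ((hasDerivAt_const p 1).sub
      (differentiableAt_of_Rcurve (hRd p hpI) hp.1.ne').hasDerivAt)).congr_deriv (by simp [h0])
  -- if `F' p = 0` then `p` is a critical point of the concave `q ↦ q (F p - F q)`, which vanishes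
  -- at `p` but is positive on `(0, p)`
  have hcrit : HasDerivAt (Rtilt F (F p)) 0 p := by
    simpa [hR.deriv] using hasDerivAt_Rtilt hRd (F p) hpI
  have hslope := (strictConcaveOn_Rtilt hcon (F p)).concaveOn.le_slope_of_hasDerivAt (x := p / 2)
    ⟨by linarith [hp.1], by linarith [hp.2]⟩ hpI (by linarith [hp.1]) hcrit
  have hlt : F (p / 2) < F p := hF.mono ⟨by linarith [hp.1], by linarith [hp.2]⟩ hpI
    (by linarith [hp.1])
  rw [slope_def_field, Rtilt_eq_mul, Rtilt_eq_mul, sub_self, mul_zero, zero_sub] at hslope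
  have : -(p / 2 * (F p - F (p / 2))) / (p - p / 2) < 0 :=
    div_neg_of_neg_of_pos (by nlinarith [hp.1]) (by linarith [hp.1])
  linarith

end Revenue

section Reject

variable {F : ℝ → ℝ} {μ p1 t : ℝ} {p2R p2A : Measure ℝ}

/-- The probability of a first-round reject: the denominator of `muR`. -/
def rejProb (F : ℝ → ℝ) (μ p1 t : ℝ) : ℝ := μ * F t + (1 - μ) * F p1

theorem rejProb_lt (hμ : μ < 1) (hF : F p1 < F t) : rejProb F μ p1 t < F t := by
  rw [rejProb]
  nlinarith

theorem Rrej_of_le (hF : NiceCDF F) (hp1 : p1 ∈ Ioc 0 1) (hp1t : p1 ≤ t) (ht : t ≤ 1)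
    (hD : 0 < rejProb F μ p1 t) {p : ℝ} (hp : p ∈ Icc 0 p1) :
    Rrej F μ p1 t p = Rtilt F (rejProb F μ p1 t) p / rejProb F μ p1 t := by
  have hmono := hF.mono.monotoneOn
  have hFp : F p ≤ F p1 := hmono ⟨hp.1, hp.2.trans hp1.2⟩ ⟨hp1.1.le, hp1.2⟩ hp.2
  have hFt : 0 < F t := hF.pos_s9 ⟨hp1.1.trans_le hp1t, ht⟩
  have hFp1t : F p1 ≤ F t := hmono ⟨hp1.1.le, hp1.2⟩ ⟨hp1.1.le.trans hp1t, ht⟩ hp1t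
  have hFp1 : F p1 ≠ 0 := (hF.pos_s9 hp1).ne'
  rw [Rrej, FrejCDF, Fle, Fle, min_eq_left ((div_le_one hFt).2 (hFp.trans hFp1t)),
    min_eq_left ((div_le_one (hF.pos_s9 hp1)).2 hFp), muR, Rtilt, Rcurve]
  rw [rejProb] at hD ⊢
  field_simp
  ring

theorem Rrej_of_mem_Icc (hF : NiceCDF F) (hp1 : p1 ∈ Ioc 0 1) (ht : t ≤ 1)
    (hD : 0 < rejProb F μ p1 t) {p : ℝ} (hp : p ∈ Icc p1 t) :
    Rrej F μ p1 t p = μ * Rtilt F (F t) p / rejProb F μ p1 t := by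
  have hmono := hF.mono.monotoneOn
  have hpI : p ∈ Icc (0:ℝ) 1 := ⟨hp1.1.le.trans hp.1, hp.2.trans ht⟩
  have hFp : F p ≤ F t := hmono hpI ⟨hpI.1.trans hp.2, ht⟩ hp.2
  have hFt : 0 < F t := hF.pos_s9 ⟨hp1.1.trans_le (hp.1.trans hp.2), ht⟩
  rw [Rrej, FrejCDF, Fle, Fle, min_eq_left ((div_le_one hFt).2 hFp),
    min_eq_right ((one_le_div (hF.pos_s9 hp1)).2 (hmono ⟨hp1.1.le, hp1.2⟩ hpI hp.1)), muR, Rtilt,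
    Rcurve]
  rw [rejProb] at hD ⊢
  field_simp
  ring

theorem Rrej_of_ge (hF : NiceCDF F) (hp1 : p1 ∈ Ioc 0 1) (hp1t : p1 ≤ t) {p : ℝ}
    (hp : p ∈ Icc t 1) : Rrej F μ p1 t p = 0 := by
  have hmono := hF.mono.monotoneOn
  have hpI : p ∈ Icc (0:ℝ) 1 := ⟨hp1.1.le.trans (hp1t.trans hp.1), hp.2⟩
  have htI : t ∈ Icc (0:ℝ) 1 := ⟨hp1.1.le.trans hp1t, hp.1.trans hp.2⟩
  have hFt : F t ≤ F p := hmono htI hpI hp.1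
  rw [Rrej, FrejCDF, Fle, Fle,
    min_eq_right ((one_le_div (hF.pos_s9 ⟨hp1.1.trans_le hp1t, htI.2⟩)).2 hFt),
    min_eq_right ((one_le_div (hF.pos_s9 hp1)).2 ((hmono ⟨hp1.1.le, hp1.2⟩ htI hp1t).trans hFt))]
  ring

theorem Continuation.mem_msupp_cases (hF : NiceCDF F)
    (hRd : ∀ p ∈ Icc (0:ℝ) 1, DifferentiableAt ℝ (Rcurve F) p) (ht : t ∈ Ioo (0:ℝ) 1)
    (hμ : μ ∈ Ico (0:ℝ) 1) (hp1 : p1 ∈ Ioc (0:ℝ) 1) (hp1t : p1 ≤ t)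
    (hc : Continuation F μ p1 p2R p2A t) {y : ℝ} (hy : y ∈ msupp p2R) :
    (y ∈ Ioo 0 p1 ∧ IsLocalMax (Rtilt F (rejProb F μ p1 t)) y) ∨
      (y ∈ Ioo p1 t ∧ IsLocalMax (Rtilt F (F t)) y) := by
  set D := rejProb F μ p1 t
  have hD : 0 < D := hc.denR_pos
  have hyI := hc.suppR01 hy
  set M := Rrej F μ p1 t y
  have hmax : ∀ p ∈ Icc (0:ℝ) 1, Rrej F μ p1 t p ≤ M := isMaxOn_iff.1 (hc.optR y hy)
  have hleft : ∀ p ∈ Icc 0 p1, Rtilt F D p ≤ D * M := fun p hp => by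
    have := hmax p ⟨hp.1, hp.2.trans hp1.2⟩
    rwa [Rrej_of_le hF hp1 hp1t ht.2.le hD hp, div_le_iff₀ hD, mul_comm] at this
  have hright : ∀ p ∈ Icc p1 t, μ * Rtilt F (F t) p ≤ D * M := fun p hp => by
    have := hmax p ⟨hp1.1.le.trans hp.1, hp.2.trans ht.2.le⟩
    rw [Rrej_of_mem_Icc hF hp1 ht.2.le hD hp, div_le_iff₀ hD] at this
    linarith
  have hM : 0 < M := by
    obtain ⟨q, hq, hqpos⟩ := exists_Rtilt_pos hF hD hp1.1
    nlinarith [hleft q ⟨hq.1.le, hq.2.le⟩]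
  have hy0 : 0 < y := hyI.1.lt_of_ne fun h => by simp [M, Rrej, ← h] at hM
  have hyt : y < t := lt_of_not_ge fun h => by
    simp [M, Rrej_of_ge hF hp1 hp1t ⟨h, hyI.2⟩] at hM
  have hμpos : p1 ≤ y → 0 < μ := fun h => hμ.1.lt_of_ne fun h0 => by
    simp [M, Rrej_of_mem_Icc hF hp1 ht.2.le hD ⟨h, hyt.le⟩, ← h0] at hM
  have hDM_left : y ≤ p1 → D * M = Rtilt F D y := fun h => by
    show D * Rrej F μ p1 t y = _
    rw [Rrej_of_le hF hp1 hp1t ht.2.le hD ⟨hy0.le, h⟩, mul_div_cancel₀ _ hD.ne']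
  have hDM_right : p1 ≤ y → D * M = μ * Rtilt F (F t) y := fun h => by
    show D * Rrej F μ p1 t y = _
    rw [Rrej_of_mem_Icc hF hp1 ht.2.le hD ⟨h, hyt.le⟩, mul_div_cancel₀ _ hD.ne']
  rcases lt_trichotomy y p1 with hlt | heq | hgt
  · refine Or.inl ⟨⟨hy0, hlt⟩, ?_⟩
    filter_upwards [Ioo_mem_nhds hy0 hlt] with p hp
    exact (hleft p ⟨hp.1.le, hp.2.le⟩).trans (hDM_left hlt.le).le
  · have hμ0 := hμpos heq.ge
    have hDFt : D < F t :=
      rejProb_lt hμ.2 (hF.mono ⟨hp1.1.le, hp1.2⟩ ⟨ht.1.le, ht.2.le⟩ (heq ▸ hyt))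
    refine absurd (eq_of_Rtilt_le_left_of_le_right hRd hyI hDFt.le ?_ ?_) hDFt.ne
    · filter_upwards [Ioc_mem_nhdsLE hy0] with p hp
      exact (hleft p ⟨hp.1.le, heq ▸ hp.2⟩).trans (hDM_left heq.le).le
    · filter_upwards [Ico_mem_nhdsGE hyt] with p hp
      exact le_of_mul_le_mul_left ((hright p ⟨heq ▸ hp.1, hp.2.le⟩).trans (hDM_right heq.ge).le) hμ0
  · refine Or.inr ⟨⟨hgt, hyt⟩, ?_⟩
    filter_upwards [Ioo_mem_nhds hgt hyt] with p hp
    exact le_of_mul_le_mul_left ((hright p ⟨hp.1.le, hp.2.le⟩).trans (hDM_right hgt.le).le)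
      (hμpos hgt.le)

theorem Continuation.maxRtilt_rejProb_eq (hF : NiceCDF F)
    (hcon : StrictConcaveOn ℝ (Icc (0:ℝ) 1) (Rcurve F))
    (hRd : ∀ p ∈ Icc (0:ℝ) 1, DifferentiableAt ℝ (Rcurve F) p) (ht : t ∈ Ioo (0:ℝ) 1)
    (hμ : μ ∈ Ico (0:ℝ) 1) (hp1 : p1 ∈ Ioc (0:ℝ) 1) (hc : Continuation F μ p1 p2R p2A t)
    (hsf : SophFocused p2A t) :
    p1 < t ∧ maxRtilt F (rejProb F μ p1 t) = μ * maxRtilt F (F t) := by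
  have := hc.probR
  obtain ⟨a, rfl, hta⟩ := hsf
  have hind : ∫ x, max (t - x) 0 ∂p2R = t - p1 := by
    have := hc.indiff
    rw [integral_dirac, max_eq_right (sub_nonpos.2 hta)] at this
    linarith
  have hp1t : p1 ≤ t := by
    linarith [integral_nonneg (μ := p2R) (f := fun x => max (t - x) 0) fun x => le_max_right _ _]
  have hcases := fun y (hy : y ∈ msupp p2R) => hc.mem_msupp_cases hF hRd ht hμ hp1 hp1t hy
  -- a one-point support `{y}` would give `t - y = t - p₁` in the indifference equation
  have hns : ¬ (msupp p2R).Subsingleton := by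
    intro hsub
    obtain ⟨y, hy⟩ : (msupp p2R).Nonempty :=
      msupp_eq_support p2R ▸ Measure.nonempty_support (IsProbabilityMeasure.ne_zero p2R)
    rw [integral_eq_of_msupp_subset_singleton (fun z hz => hsub hz hy) fun x => max (t - x) 0]
      at hind
    rcases hcases y hy with ⟨hy', -⟩ | ⟨hy', -⟩ <;>
      rw [max_eq_left (by linarith [hy'.2])] at hind <;> linarith [hy'.1, hy'.2]
  have hleft : ∃ y ∈ msupp p2R, y ∈ Ioo 0 p1 ∧ IsLocalMax (Rtilt F (rejProb F μ p1 t)) y := by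
    by_contra! h
    refine hns fun y hy z hz => ?_
    obtain ⟨-, hymax⟩ := (hcases y hy).resolve_left fun h' => h y hy h'.1 h'.2
    obtain ⟨-, hzmax⟩ := (hcases z hz).resolve_left fun h' => h z hz h'.1 h'.2
    exact eq_of_isLocalMax_Rtilt hcon hRd (hc.suppR01 hy) (hc.suppR01 hz) hymax hzmax
  have hright : ∃ y ∈ msupp p2R, y ∈ Ioo p1 t ∧ IsLocalMax (Rtilt F (F t)) y := by
    by_contra! h
    refine hns fun y hy z hz => ?_
    obtain ⟨-, hymax⟩ := (hcases y hy).resolve_right fun h' => h y hy h'.1 h'.2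
    obtain ⟨-, hzmax⟩ := (hcases z hz).resolve_right fun h' => h z hz h'.1 h'.2
    exact eq_of_isLocalMax_Rtilt hcon hRd (hc.suppR01 hy) (hc.suppR01 hz) hymax hzmax
  obtain ⟨y, hy, hyI, hymax⟩ := hleft
  obtain ⟨z, hz, hzI, hzmax⟩ := hright
  refine ⟨hzI.1.trans hzI.2, ?_⟩
  have hD : 0 < rejProb F μ p1 t := hc.denR_pos
  have hyz : Rrej F μ p1 t y = Rrej F μ p1 t z :=
    le_antisymm (isMaxOn_iff.1 (hc.optR z hz) y (hc.suppR01 hy))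
      (isMaxOn_iff.1 (hc.optR y hy) z (hc.suppR01 hz))
  rw [Rrej_of_le hF hp1 hp1t ht.2.le hD ⟨hyI.1.le, hyI.2.le⟩,
    Rrej_of_mem_Icc hF hp1 ht.2.le hD ⟨hzI.1.le, hzI.2.le⟩, div_left_inj' hD.ne'] at hyz
  rw [maxRtilt_eq_of_isMaxOn hF (hc.suppR01 hy)
      (isMaxOn_Rtilt_of_isLocalMax hcon (hc.suppR01 hy) hymax),
    maxRtilt_eq_of_isMaxOn hF (hc.suppR01 hz)
      (isMaxOn_Rtilt_of_isLocalMax hcon (hc.suppR01 hz) hzmax), hyz]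

end Reject

section Implementation

variable {F : ℝ → ℝ}

/-- Compare the subgradient inequality for `maxRtilt F` from `D₂` to `D₁` with its strict form from
`D₂` to `c`. -/
theorem lt_of_maxRtilt_eq_mul (hF : NiceCDF F)
    (hRd : ∀ p ∈ Icc (0:ℝ) 1, DifferentiableAt ℝ (Rcurve F) p) {c μ₁ μ₂ q₁ q₂ : ℝ}
    (hμ : μ₁ < μ₂) (hμ₂ : μ₂ < 1) (hq₂ : q₂ < c) (hD₂ : μ₂ * c + (1 - μ₂) * q₂ ∈ Ioo (0:ℝ) 1)
    (h₁ : maxRtilt F (μ₁ * c + (1 - μ₁) * q₁) = μ₁ * maxRtilt F c)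
    (h₂ : maxRtilt F (μ₂ * c + (1 - μ₂) * q₂) = μ₂ * maxRtilt F c) : q₁ < q₂ := by
  set D₁ := μ₁ * c + (1 - μ₁) * q₁
  set D₂ := μ₂ * c + (1 - μ₂) * q₂
  set a := argmaxRtilt F D₂
  set K := maxRtilt F c
  have ha : 0 < a := (argmaxRtilt_mem_Ioo hF hD₂).1
  have hsub := maxRtilt_add_mul_le hF D₂ D₁
  have hgap := maxRtilt_add_mul_lt hF hRd hD₂ (c := c) (ne_of_gt (by nlinarith))
  rw [h₁, h₂] at hsub
  rw [h₂] at hgap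
  by_contra! hq
  have hDD : D₂ - D₁ ≤ (μ₂ - μ₁) * (c - q₂) := by nlinarith
  have hK : K ≤ (c - q₂) * a := by
    have : (μ₂ - μ₁) * K ≤ (μ₂ - μ₁) * ((c - q₂) * a) := by nlinarith
    exact le_of_mul_le_mul_left this (by linarith)
  have : (1 - μ₂) * ((c - q₂) * a) < (1 - μ₂) * K := by
    have : c - D₂ = (1 - μ₂) * (c - q₂) := by ring
    nlinarith
  nlinarith

theorem differentiableWithinAt_of_maxRtilt_eq_mul (hF : NiceCDF F)
    (hcon : StrictConcaveOn ℝ (Icc (0:ℝ) 1) (Rcurve F))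
    (hRd : ∀ p ∈ Icc (0:ℝ) 1, DifferentiableAt ℝ (Rcurve F) p) {c μ₀ : ℝ} {S : Set ℝ}
    {g : ℝ → ℝ} (hμ₀ : μ₀ ∈ S) (hS : ∀ μ ∈ S, μ < 1) (hg : MapsTo g S (Ioo 0 1))
    (hD : ∀ μ ∈ S, μ * c + (1 - μ) * F (g μ) ∈ Ioo (0:ℝ) 1)
    (heq : ∀ μ ∈ S, maxRtilt F (μ * c + (1 - μ) * F (g μ)) = μ * maxRtilt F c) :
    DifferentiableWithinAt ℝ g S μ₀ := by
  set D := fun μ => μ * c + (1 - μ) * F (g μ)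
  have hDd : HasDerivWithinAt D (maxRtilt F c / argmaxRtilt F (D μ₀)) S μ₀ :=
    hasDerivWithinAt_of_strictMonoOn_comp (strictMonoOn_maxRtilt hF)
      (isOpen_Ioo.mem_nhds (hD μ₀ hμ₀)) hD (hasDerivAt_maxRtilt hF hcon hRd (hD μ₀ hμ₀))
      (argmaxRtilt_mem_Ioo hF (hD μ₀ hμ₀)).1.ne' (hasDerivAt_mul_const _).hasDerivWithinAt
      heq hμ₀
  have hFg := (hDd.sub ((hasDerivWithinAt_id μ₀ S).mul_const c)).div
    ((hasDerivWithinAt_id μ₀ S).const_sub 1) (sub_ne_zero.2 (hS μ₀ hμ₀).ne')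
  have hgμ₀ := hg hμ₀
  refine (hasDerivWithinAt_of_strictMonoOn_comp hF.mono (Icc_mem_nhds hgμ₀.1 hgμ₀.2)
    (fun μ hμ => Ioo_subset_Icc_self (hg hμ))
    (differentiableAt_of_Rcurve (hRd _ (Ioo_subset_Icc_self hgμ₀)) hgμ₀.1.ne').hasDerivAt
    (deriv_ne_zero_of_Rcurve hF hcon hRd ⟨hgμ₀.1, hgμ₀.2.le⟩) hFg (fun μ hμ => ?_)
    hμ₀).differentiableWithinAt
  have := sub_ne_zero.2 (hS μ hμ).ne'
  simp only [Function.comp_apply, Pi.div_apply, Pi.sub_apply, D, id]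
  field_simp
  ring

end Implementation

/-- **Lemma: monotonicity of the implementing first-round price.**
Fix `t ∈ (0,1)`. Let `g μ = p1(t,μ)` be a function giving, for every `μ` in
`S = {μ ∈ [0,1) : (1-μ) R'(t) + (1 - F t) μ ≥ 0}`, the (unique) first-round price
of a sophisticated-focused implementation of `t` at sophistication `μ`. Then `g`
is differentiable and strictly increasing on `S`. -/
theorem implementing_p1_differentiable_strictMono
    (F : ℝ → ℝ) (hF : NiceCDF F)
    (hcon : StrictConcaveOn ℝ (Icc (0:ℝ) 1) (Rcurve F))
    (hRd : ∀ p ∈ Icc (0:ℝ) 1, DifferentiableAt ℝ (Rcurve F) p)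
    (t : ℝ) (ht : t ∈ Ioo (0:ℝ) 1)
    (S : Set ℝ)
    (hS : S = {μ | μ ∈ Ico (0:ℝ) 1 ∧
      0 ≤ (1 - μ) * deriv (Rcurve F) t + (1 - F t) * μ})
    (g : ℝ → ℝ)
    (hg : ∀ μ ∈ S, g μ ∈ Ioc (0:ℝ) 1 ∧
      ∃ p2R p2A : Measure ℝ, Continuation F μ (g μ) p2R p2A t ∧ SophFocused p2A t) :
    StrictMonoOn g S ∧ ∀ μ ∈ S, DifferentiableWithinAt ℝ g S μ := by
  have hSIco : ∀ μ ∈ S, μ ∈ Ico (0:ℝ) 1 := fun μ hμ => (hS ▸ hμ).1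
  have hkey : ∀ μ ∈ S, g μ < t ∧ 0 < rejProb F μ (g μ) t ∧
      maxRtilt F (rejProb F μ (g μ) t) = μ * maxRtilt F (F t) := fun μ hμ => by
    obtain ⟨hgμ, p2R, p2A, hc, hsf⟩ := hg μ hμ
    have h := hc.maxRtilt_rejProb_eq hF hcon hRd ht (hSIco μ hμ) hgμ hsf
    exact ⟨h.1, hc.denR_pos, h.2⟩
  have hFg : ∀ μ ∈ S, F (g μ) < F t := fun μ hμ =>
    hF.mono ⟨(hg μ hμ).1.1.le, (hg μ hμ).1.2⟩ ⟨ht.1.le, ht.2.le⟩ (hkey μ hμ).1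
  have hD : ∀ μ ∈ S, rejProb F μ (g μ) t ∈ Ioo (0:ℝ) 1 := fun μ hμ =>
    ⟨(hkey μ hμ).2.1,
      (rejProb_lt (hSIco μ hμ).2 (hFg μ hμ)).trans (hF.lt_one ⟨ht.1.le, ht.2⟩)⟩
  refine ⟨fun μ₁ hμ₁ μ₂ hμ₂ hμ => ?_, fun μ hμ => ?_⟩
  · refine (hF.mono.lt_iff_lt ⟨(hg μ₁ hμ₁).1.1.le, (hg μ₁ hμ₁).1.2⟩
      ⟨(hg μ₂ hμ₂).1.1.le, (hg μ₂ hμ₂).1.2⟩).1 ?_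
    exact lt_of_maxRtilt_eq_mul hF hRd hμ (hSIco μ₂ hμ₂).2 (hFg μ₂ hμ₂) (hD μ₂ hμ₂)
      (hkey μ₁ hμ₁).2.2 (hkey μ₂ hμ₂).2.2
  · exact differentiableWithinAt_of_maxRtilt_eq_mul hF hcon hRd hμ (fun μ hμ => (hSIco μ hμ).2)
      (fun μ hμ => ⟨(hg μ hμ).1.1, (hkey μ hμ).1.trans ht.2⟩) hD (fun μ hμ => (hkey μ hμ).2.2)

end RepeatedSales
end
end

section
/- There exists a distribution-specific constant ε_F > 0 such that sup over t in (0,1] of [ t(1-F(t)) + p*_{\le t}(1-F(p*_{\le t})) ] is at least R* + ε_F, where p*_{\le t} denotes the unique maximizer on [0,t] of the truncated revenue curve R_{\le t}(p)=p(1-F(p)/F(t)), and R* = max_{p∈[0,1]} p(1-F(p)). -/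
open MeasureTheory Set Filter

noncomputable section

namespace RepeatedSales

/-- **Lemma: the full-sophistication equilibrium revenue exceeds the
monopoly revenue by a constant.** There exists a distribution-specific `ε > 0`
such that `sup_{t ∈ (0,1]} [ R(t) + R(p*_{≤t}) ] ≥ R* + ε`, where `p*_{≤t}`
denotes the unique maximizer of the truncated revenue curve `R_{≤t}` on `[0,t]`,
and `R* = max_{p ∈ [0,1]} p (1 - F p)`. -/
theorem full_sophistication_revenue_gap
    (F : ℝ → ℝ) (hF : NiceCDF F)
    (hcon : StrictConcaveOn ℝ (Icc (0:ℝ) 1) (Rcurve F))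
    (pstar : ℝ) (hps_mem : pstar ∈ Icc (0:ℝ) 1)
    (hps_max : IsMaxOn (Rcurve F) (Icc (0:ℝ) 1) pstar)
    (Pt : ℝ → ℝ)
    (hPt : ∀ t ∈ Ioc (0:ℝ) 1, Pt t ∈ Icc (0:ℝ) t ∧
      IsMaxOn (Rle F t) (Icc (0:ℝ) t) (Pt t) ∧
      (∀ q ∈ Icc (0:ℝ) t, IsMaxOn (Rle F t) (Icc (0:ℝ) t) q → q = Pt t)) :
    ∃ ε : ℝ, 0 < ε ∧
      Rcurve F pstar + ε ≤
        sSup ((fun t => Rcurve F t + Rcurve F (Pt t)) '' Ioc (0:ℝ) 1) := by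
  obtain ⟨hps0, hps1⟩ := hps_mem
  have hmonoOn : MonotoneOn F (Icc (0:ℝ) 1) := hF.mono.monotoneOn
  have hF_nonneg : ∀ p ∈ Icc (0:ℝ) 1, 0 ≤ F p := fun p hp => by
    have := hmonoOn (by constructor <;> norm_num) hp hp.1
    simpa [hF.zero] using this
  have hF_le_one : ∀ p ∈ Icc (0:ℝ) 1, F p ≤ 1 := fun p hp => by
    have := hmonoOn hp (by constructor <;> norm_num) hp.2
    simpa [hF.one] using this
  have hhalf : (1/2 : ℝ) ∈ Icc (0:ℝ) 1 := by norm_num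
  have hFhalf : F (1/2) < 1 := by
    have := hF.mono hhalf (show (1:ℝ) ∈ Icc (0:ℝ) 1 by constructor <;> norm_num)
      (by norm_num)
    simpa [hF.one] using this
  have hRhalf : 0 < Rcurve F (1/2) := by
    unfold Rcurve; nlinarith
  have hRstar_pos : 0 < Rcurve F pstar := lt_of_lt_of_le hRhalf (hps_max hhalf)
  have hps_pos : 0 < pstar := by
    by_contra h
    push_neg at h
    have hz : pstar = 0 := le_antisymm h hps0
    rw [hz] at hRstar_pos
    simp [Rcurve] at hRstar_pos
  set t := pstar with ht_def
  have htIoc : t ∈ Ioc (0:ℝ) 1 := ⟨hps_pos, hps1⟩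
  obtain ⟨hmem, hmax, -⟩ := hPt t htIoc
  have htIcc : t ∈ Icc (0:ℝ) 1 := ⟨hps_pos.le, hps1⟩
  have hFt_pos : 0 < F t := by
    have := hF.mono (by constructor <;> norm_num) htIcc hps_pos
    simpa [hF.zero] using this
  have hhalfmem : t/2 ∈ Icc (0:ℝ) t := ⟨by linarith, by linarith⟩
  have hhalfIcc : t/2 ∈ Icc (0:ℝ) 1 := ⟨by linarith, by linarith⟩
  have hFtt : F (t/2) < F t := hF.mono hhalfIcc htIcc (by linarith)
  have hRle_half : 0 < Rle F t (t/2) := by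
    have hlt : F (t/2) / F t < 1 := (div_lt_one hFt_pos).2 hFtt
    have hnn : 0 ≤ F (t/2) / F t := div_nonneg (hF_nonneg _ hhalfIcc) hFt_pos.le
    unfold Rle Fle
    rw [min_eq_left hlt.le]
    nlinarith
  have hRle_Pt : Rle F t (t/2) ≤ Rle F t (Pt t) := hmax hhalfmem
  have hPtIcc : Pt t ∈ Icc (0:ℝ) 1 := ⟨hmem.1, le_trans hmem.2 hps1⟩
  have hRle_le : Rle F t (Pt t) ≤ Rcurve F (Pt t) := by
    unfold Rle Rcurve Fle
    have h1 : F (Pt t) ≤ min (F (Pt t) / F t) 1 := by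
      refine le_min ?_ (hF_le_one _ hPtIcc)
      rw [le_div_iff₀ hFt_pos]
      nlinarith [hF_nonneg _ hPtIcc, hF_le_one _ htIcc]
    nlinarith [hmem.1]
  have hε : 0 < Rcurve F (Pt t) :=
    lt_of_lt_of_le (lt_of_lt_of_le hRle_half hRle_Pt) hRle_le
  refine ⟨Rcurve F (Pt t), hε, ?_⟩
  have hbdd : BddAbove ((fun t => Rcurve F t + Rcurve F (Pt t)) '' Ioc (0:ℝ) 1) := by
    refine ⟨2 * Rcurve F pstar, ?_⟩
    rintro x ⟨s, hs, rfl⟩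
    have hsIcc : s ∈ Icc (0:ℝ) 1 := ⟨hs.1.le, hs.2⟩
    obtain ⟨hm, -, -⟩ := hPt s hs
    have h1 : Rcurve F s ≤ Rcurve F pstar := hps_max hsIcc
    have h2 : Rcurve F (Pt s) ≤ Rcurve F pstar :=
      hps_max ⟨hm.1, le_trans hm.2 hs.2⟩
    simp only
    linarith
  have hin : Rcurve F t + Rcurve F (Pt t) ∈
      ((fun t => Rcurve F t + Rcurve F (Pt t)) '' Ioc (0:ℝ) 1) :=
    mem_image_of_mem _ htIoc
  have := le_csSup hbdd hin
  linarith

end RepeatedSales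
end
end

section
/- Let F^S and F^N be CDFs of probability distributions supported on [0,H] (H>0), with F^S continuous, let μ ∈ [0,1], let F = μ·F^S + (1-μ)·F^N, and let δ ∈ [0,1). Then sup over p in [0,H] of p·(1 - F(p/(1-δ))) is at least (1-δ)·μ·(sup over p in [0,H] of p·(1 - F^S(p))). -/
open Set

noncomputable section

/-- **Lemma: continuous-distribution revenue comparison.**
Let `F^S`, `F^N` be CDFs of distributions supported on `[0,H]` (`H > 0`), with
`F^S` continuous and `F^N` right-continuous, let `μ ∈ [0,1]`,
`F = μ F^S + (1-μ) F^N`, and `δ ∈ [0,1)`. Then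
`sup_{p ∈ [0,H]} p (1 - F(p/(1-δ))) ≥ (1-δ) μ sup_{p ∈ [0,H]} p (1 - F^S(p))`. -/
theorem mixture_revenue_lower_bound_continuous
    (H : ℝ) (hH : 0 < H)
    (FS FN : ℝ → ℝ)
    (hFSmono : Monotone FS) (hFNmono : Monotone FN)
    (hFSrange : ∀ x, FS x ∈ Icc (0:ℝ) 1) (hFNrange : ∀ x, FN x ∈ Icc (0:ℝ) 1)
    (hFSneg : ∀ x < (0:ℝ), FS x = 0) (hFNneg : ∀ x < (0:ℝ), FN x = 0)
    (hFStop : ∀ x, H ≤ x → FS x = 1) (hFNtop : ∀ x, H ≤ x → FN x = 1)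
    (hFScont : Continuous FS)
    (hFNrc : ∀ x, ContinuousWithinAt FN (Ici x) x)
    (μ : ℝ) (hμ : μ ∈ Icc (0:ℝ) 1)
    (δ : ℝ) (hδ : δ ∈ Ico (0:ℝ) 1) :
    (1 - δ) * μ * sSup ((fun p => p * (1 - FS p)) '' Icc (0:ℝ) H)
      ≤ sSup ((fun p =>
          p * (1 - (μ * FS (p / (1 - δ)) + (1 - μ) * FN (p / (1 - δ))))) '' Icc (0:ℝ) H) := by
  set g : ℝ → ℝ := fun p =>
    p * (1 - (μ * FS (p / (1 - δ)) + (1 - μ) * FN (p / (1 - δ)))) with hg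
  have hδ' : (0:ℝ) < 1 - δ := by linarith [hδ.2]
  have hμ0 := hμ.1
  have hμ1 := hμ.2
  -- the mixture stays in [0,1]
  have hFrange : ∀ x, μ * FS x + (1 - μ) * FN x ∈ Icc (0:ℝ) 1 := by
    intro x
    have h1 := hFSrange x
    have h2 := hFNrange x
    constructor
    · have := mul_nonneg hμ0 h1.1
      have := mul_nonneg (by linarith : (0:ℝ) ≤ 1 - μ) h2.1
      linarith
    · nlinarith [h1.2, h2.2]
  -- g is bounded above by H on [0,H]
  have hbddT : BddAbove (g '' Icc (0:ℝ) H) := by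
    refine ⟨H, ?_⟩
    rintro _ ⟨p, hp, rfl⟩
    have h := hFrange (p / (1 - δ))
    have : g p ≤ p * 1 := by
      apply mul_le_mul_of_nonneg_left (by linarith [h.1]) hp.1
    calc g p ≤ p * 1 := this
      _ = p := mul_one p
      _ ≤ H := hp.2
  have h0T : (0:ℝ) ≤ sSup (g '' Icc (0:ℝ) H) := by
    have h0 : (0:ℝ) ∈ Icc (0:ℝ) H := ⟨le_refl 0, le_of_lt hH⟩
    have : g 0 = 0 := by simp [hg]
    have := le_csSup hbddT (mem_image_of_mem g h0)
    linarith
  rcases eq_or_lt_of_le hμ0 with hμz | hμpos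
  · rw [← hμz]
    simpa using h0T
  set c : ℝ := (1 - δ) * μ with hc
  have hcpos : 0 < c := mul_pos hδ' hμpos
  rw [show (1 - δ) * μ * sSup ((fun p => p * (1 - FS p)) '' Icc (0:ℝ) H)
      = c * sSup ((fun p => p * (1 - FS p)) '' Icc (0:ℝ) H) from rfl]
  rw [mul_comm, ← le_div_iff₀ hcpos]
  apply csSup_le (by exact (nonempty_Icc.mpr (le_of_lt hH)).image _)
  rintro _ ⟨p, hp, rfl⟩
  rw [le_div_iff₀ hcpos]
  -- key pointwise inequality at (1-δ)p
  have hmem : (1 - δ) * p ∈ Icc (0:ℝ) H := by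
    constructor
    · exact mul_nonneg (le_of_lt hδ') hp.1
    · nlinarith [hp.2, hp.1, hδ.1]
  have hdiv : ((1 - δ) * p) / (1 - δ) = p := by
    field_simp
  have hkey : p * (1 - FS p) * c ≤ g ((1 - δ) * p) := by
    rw [hg]
    simp only [hdiv]
    have hFN := hFNrange p
    have h1 : μ * (1 - FS p) ≤ 1 - (μ * FS p + (1 - μ) * FN p) := by
      nlinarith [hFN.2]
    have h2 : 0 ≤ (1 - δ) * p := mul_nonneg (le_of_lt hδ') hp.1
    calc p * (1 - FS p) * c = (1 - δ) * p * (μ * (1 - FS p)) := by ring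
      _ ≤ (1 - δ) * p * (1 - (μ * FS p + (1 - μ) * FN p)) :=
          mul_le_mul_of_nonneg_left h1 h2
  calc p * (1 - FS p) * c ≤ g ((1 - δ) * p) := hkey
    _ ≤ sSup (g '' Icc (0:ℝ) H) := le_csSup hbddT (mem_image_of_mem g hmem)
end
end
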